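/- The following are equivalent: (c₃) 𝒩₃ := ⋃_{u∈𝒰} co cone(u(T) ∪ {(0_{X*},1)}) is a closed and convex subset of X*×ℝ (weak*-topology on X* times the usual topology on ℝ); (d₃) for every c ∈ X* with inf(RLIP_c) > −∞ there exist ū ∈ 𝒰 and λ̄ ∈ ℝ₊^{(T)} such that c = −∑_{t∈supp λ̄} λ̄_t ū_t¹ and −∑_{t∈supp λ̄} λ̄_t ū_t² = inf(RLIP_c) (stable robust strong duality for the pair (RLIP_c)–(RLID³_c)). -/

import Mathlib

/-!
Let `K` be the characteristic cone of the robust system, the conical hull of `⋃ₜ 𝒰ₜ ∪ {(0, 1)}`.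
By the generalized Farkas lemma its closure consists of the `(a, r)` for which `a ≤ r` holds on the
feasible set, i.e. for which `-r ≤ inf (RLIP_{-a})`. Always `𝒩₃ ⊆ K`, and the generators of `K`
lie in `𝒩₃`, so `𝒩₃` is closed and convex iff `closure K ⊆ 𝒩₃`. Read pointwise, this inclusion is
stable strong duality: `(-c, -inf (RLIP_c)) ∈ closure K` lying in the cone generated by one
scenario `u` yields the multipliers, and weak duality forces the weight of `(0, 1)` to vanish.
-/

open Pointwise

variable {X : Type*} [AddCommGroup X] [Module ℝ X] [TopologicalSpace X]
  [IsTopologicalAddGroup X] [ContinuousSMul ℝ X] [LocallyConvexSpace ℝ X] [T2Space X]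
  {T : Type*}

/-- The cone generated by a set `A`: `cone A = {λa : λ ≥ 0, a ∈ A}`. -/
def coneSet {E : Type*} [SMul ℝ E] (A : Set E) : Set E :=
  {p | ∃ l : ℝ, 0 ≤ l ∧ ∃ a ∈ A, p = l • a}

/-- The optimal value of the robust primal problem (RLIP_c). -/
noncomputable def infRLIP (U : T → Set (WeakDual ℝ X × ℝ)) (c : WeakDual ℝ X) : EReal :=
  ⨅ x : {x : X | ∀ t, ∀ v ∈ U t, v.1 x ≤ v.2}, ((c x.1 : ℝ) : EReal)

open Set

instance WeakDual.instLocallyConvexSpace {E : Type*} [AddCommGroup E] [Module ℝ E]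
    [TopologicalSpace E] : LocallyConvexSpace ℝ (WeakDual ℝ E) :=
  WeakBilin.locallyConvexSpace

namespace WeakDual

variable {𝕜 E : Type*} [NontriviallyNormedField 𝕜] [AddCommGroup E] [Module 𝕜 E]
  [TopologicalSpace E]

@[simp] lemma zero_apply (x : E) : (0 : WeakDual 𝕜 E) x = 0 := rfl

@[simp] lemma add_apply (p q : WeakDual 𝕜 E) (x : E) : (p + q) x = p x + q x := rfl

@[simp] lemma neg_apply (p : WeakDual 𝕜 E) (x : E) : (-p) x = -p x := rfl

@[simp] lemma smul_apply (a : 𝕜) (p : WeakDual 𝕜 E) (x : E) : (a • p) x = a * p x := rfl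

theorem exists_eq_apply (f : StrongDual 𝕜 (WeakDual 𝕜 E)) : ∃ x : E, ∀ p, f p = p x := by
  obtain ⟨x, rfl⟩ := LinearMap.dualEmbedding_surjective (topDualPairing 𝕜 E) f
  exact ⟨x, fun _ => rfl⟩

theorem exists_prod_eq_apply (f : StrongDual 𝕜 (WeakDual 𝕜 E × 𝕜)) :
    ∃ x : E, ∀ p : WeakDual 𝕜 E × 𝕜, f p = p.1 x + p.2 * f (0, 1) := by
  obtain ⟨x, hx⟩ := exists_eq_apply (f.comp (.inl 𝕜 _ 𝕜))
  refine ⟨x, fun p => ?_⟩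
  rw [← hx, ContinuousLinearMap.comp_apply, ← smul_eq_mul, ← map_smul, ← map_add]
  simp

end WeakDual

section ConicalHull

variable {E ι : Type*} [AddCommGroup E] [Module ℝ E]

theorem smul_mem_convexHull_coneSet {A : Set E} {l : ℝ} (hl : 0 ≤ l) {p : E}
    (hp : p ∈ convexHull ℝ (coneSet A)) : l • p ∈ convexHull ℝ (coneSet A) := by
  have hlp : l • p ∈ convexHull ℝ (l • coneSet A) := by
    rw [convexHull_smul]
    exact smul_mem_smul_set hp
  refine convexHull_mono ?_ hlp
  rintro _ ⟨_, ⟨m, hm, a, ha, rfl⟩, rfl⟩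
  exact ⟨l * m, mul_nonneg hl hm, a, ha, (mul_smul l m a).symm⟩

theorem convexHull_coneSet_eq_hull {A : Set E} (hA : A.Nonempty) :
    convexHull ℝ (coneSet A) = PointedCone.hull ℝ A := by
  refine (convexHull_min ?_ (PointedCone.convex _)).antisymm fun p hp => ?_
  · rintro _ ⟨l, hl, a, ha, rfl⟩
    exact PointedCone.smul_mem _ hl (PointedCone.subset_hull ha)
  induction hp using Submodule.span_induction with
  | mem a ha => exact subset_convexHull ℝ _ ⟨1, zero_le_one, a, ha, (one_smul ℝ a).symm⟩
  | zero =>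
    obtain ⟨a, ha⟩ := hA
    exact subset_convexHull ℝ _ ⟨0, le_rfl, a, ha, (zero_smul ℝ a).symm⟩
  | add p q _ _ hp hq =>
    have := smul_mem_convexHull_coneSet zero_le_two <|
      convex_convexHull ℝ _ hp hq one_half_pos.le one_half_pos.le (add_halves 1)
    rwa [smul_add, smul_smul, smul_smul, mul_one_div_cancel two_ne_zero, one_smul,
      one_smul] at this
  | smul c p _ hp => exact smul_mem_convexHull_coneSet c.2 hp

theorem mem_hull_range_iff {u : ι → E} {p : E} :
    p ∈ PointedCone.hull ℝ (range u) ↔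
      ∃ μ : ι →₀ ℝ, (∀ i, 0 ≤ μ i) ∧ μ.sum (fun i a => a • u i) = p := by
  rw [Finsupp.mem_span_range_iff_exists_finsupp]
  constructor
  · rintro ⟨c, rfl⟩
    refine ⟨c.mapRange Subtype.val rfl, fun i => (c i).2, ?_⟩
    rw [Finsupp.sum_mapRange_index fun i => zero_smul ℝ (u i)]
    rfl
  · rintro ⟨μ, hμ, rfl⟩
    refine ⟨μ.mapRange Nonneg.toNonneg (by simp), ?_⟩
    rw [Finsupp.sum_mapRange_index fun i => zero_smul _ (u i)]
    exact Finsupp.sum_congr fun i _ => by simp [hμ i]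

theorem mem_hull_range_union_singleton_iff {u : ι → E} {e p : E} :
    p ∈ PointedCone.hull ℝ (range u ∪ {e}) ↔
      ∃ μ : ι →₀ ℝ, (∀ i, 0 ≤ μ i) ∧ ∃ ρ : ℝ, 0 ≤ ρ ∧ p = μ.sum (fun i a => a • u i) + ρ • e := by
  rw [union_singleton, Submodule.mem_span_insert]
  constructor
  · rintro ⟨ρ, q, hq, rfl⟩
    obtain ⟨μ, hμ, rfl⟩ := mem_hull_range_iff.1 hq
    exact ⟨μ, hμ, ρ, ρ.2, add_comm _ _⟩
  · rintro ⟨μ, hμ, ρ, hρ, rfl⟩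
    exact ⟨⟨ρ, hρ⟩, _, mem_hull_range_iff.2 ⟨μ, hμ, rfl⟩, add_comm _ _⟩

theorem Prod.mem_hull_range_union_singleton_zero_one_iff {u : ι → E × ℝ} {p : E × ℝ} :
    p ∈ PointedCone.hull ℝ (range u ∪ {(0, 1)}) ↔
      ∃ μ : ι →₀ ℝ, (∀ i, 0 ≤ μ i) ∧ p.1 = μ.sum (fun i a => a • (u i).1) ∧
        μ.sum (fun i a => a * (u i).2) ≤ p.2 := by
  have hfst (μ : ι →₀ ℝ) : (μ.sum fun i a => a • u i).1 = μ.sum fun i a => a • (u i).1 := by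
    simp [Finsupp.sum, Prod.fst_sum]
  have hsnd (μ : ι →₀ ℝ) : (μ.sum fun i a => a • u i).2 = μ.sum fun i a => a * (u i).2 := by
    simp [Finsupp.sum, Prod.snd_sum]
  rw [mem_hull_range_union_singleton_iff]
  constructor
  · rintro ⟨μ, hμ, ρ, hρ, rfl⟩
    refine ⟨μ, hμ, by simp [hfst], by simp [hsnd, hρ]⟩
  · rintro ⟨μ, hμ, h₁, h₂⟩
    refine ⟨μ, hμ, p.2 - μ.sum (fun i a => a * (u i).2), sub_nonneg.2 h₂, Prod.ext ?_ ?_⟩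
    · simp [hfst, h₁]
    · simp [hsnd]

end ConicalHull

theorem exists_pi_mem_apply_eq {α : Type*} {U : T → Set α} (hU : ∀ t, (U t).Nonempty) {t : T}
    {a : α} (ha : a ∈ U t) : ∃ u : {u : T → α // ∀ s, u s ∈ U s}, u.1 t = a := by
  classical
  choose u₀ hu₀ using hU
  have hu : Function.update u₀ t a ∈ pi univ U :=
    (update_mem_pi_iff_of_mem fun s _ => hu₀ s).2 fun _ => ha
  exact ⟨⟨_, fun s => hu s trivial⟩, Function.update_self t a u₀⟩

section LinearSystem

variable {E : Type*} [AddCommGroup E] [Module ℝ E] [TopologicalSpace E]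
  (U : T → Set (WeakDual ℝ E × ℝ))

def feasibleSet : Set E := {x | ∀ t, ∀ v ∈ U t, v.1 x ≤ v.2}

noncomputable def characteristicCone : PointedCone ℝ (WeakDual ℝ E × ℝ) :=
  PointedCone.hull ℝ ((⋃ t, U t) ∪ {(0, 1)})

variable {U}

theorem apply_le_of_mem_closure_characteristicCone {p : WeakDual ℝ E × ℝ}
    (hp : p ∈ closure (characteristicCone U : Set (WeakDual ℝ E × ℝ))) {x : E}
    (hx : x ∈ feasibleSet U) : p.1 x ≤ p.2 := by
  suffices h : ∀ q ∈ characteristicCone U, q.1 x ≤ q.2 from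
    closure_minimal h (isClosed_le ((WeakDual.eval_continuous x).comp continuous_fst)
      continuous_snd) hp
  intro q hq
  induction hq using Submodule.span_induction with
  | mem q hq =>
    rcases hq with hq | rfl
    · obtain ⟨t, ht⟩ := mem_iUnion.1 hq
      exact hx t q ht
    · simp
  | zero => simp
  | add q r _ _ hq hr =>
    simp only [Prod.fst_add, Prod.snd_add, WeakDual.add_apply]
    linarith
  | smul c q _ hq =>
    simp only [← Nonneg.coe_smul, Prod.smul_fst, Prod.smul_snd, WeakDual.smul_apply, smul_eq_mul]
    exact mul_le_mul_of_nonneg_left hq c.2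

theorem inv_smul_sub_smul_mem_feasibleSet {x₀ x : E} (hx₀ : x₀ ∈ feasibleSet U) {s τ : ℝ}
    (hs : 0 ≤ s) (hτ : 0 ≤ τ) (hx : ∀ t, ∀ v ∈ U t, 0 ≤ v.1 x + v.2 * s) :
    (1 + τ * s)⁻¹ • (x₀ - τ • x) ∈ feasibleSet U := by
  intro t v hv
  rw [map_smul, map_sub, map_smul, smul_eq_mul, smul_eq_mul, inv_mul_le_iff₀ (by positivity)]
  nlinarith [hx₀ t v hv, mul_nonneg hτ (hx t v hv)]

theorem mem_closure_characteristicCone_of_forall_apply_le (hF : (feasibleSet U).Nonempty)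
    {p : WeakDual ℝ E × ℝ} (hp : ∀ x ∈ feasibleSet U, p.1 x ≤ p.2) :
    p ∈ closure (characteristicCone U : Set (WeakDual ℝ E × ℝ)) := by
  by_contra hpK
  obtain ⟨f, hfK, hfp⟩ := ProperCone.hyperplane_separation_point (Submodule.closure _) hpK
  obtain ⟨x, hf⟩ := WeakDual.exists_prod_eq_apply f
  set s := f (0, 1)
  have hs : 0 ≤ s := hfK _ (subset_closure (PointedCone.subset_hull (Or.inr rfl)))
  have hU : ∀ t, ∀ v ∈ U t, 0 ≤ v.1 x + v.2 * s := fun t v hv => by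
    rw [← hf]
    exact hfK _ (subset_closure (PointedCone.subset_hull (Or.inl (mem_iUnion.2 ⟨t, hv⟩))))
  rw [hf] at hfp
  obtain ⟨x₀, hx₀⟩ := hF
  -- `(-x, s)` solves the homogenized system `v.1 y ≤ η * v.2` but violates `p` strictly, so the
  -- dehomogenization of `(x₀, 1) + τ • (-x, s)` is feasible and violates `p` for large `τ`.
  set τ := (p.2 - p.1 x₀ + 1) / -(p.1 x + p.2 * s)
  have hτ : τ * -(p.1 x + p.2 * s) = p.2 - p.1 x₀ + 1 := div_mul_cancel₀ _ (by linarith)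
  have hτ₀ : 0 ≤ τ := div_nonneg (by linarith [hp x₀ hx₀]) (by linarith)
  have hz := hp _ (inv_smul_sub_smul_mem_feasibleSet hx₀ hs hτ₀ hU)
  rw [map_smul, map_sub, map_smul, smul_eq_mul, smul_eq_mul,
    inv_mul_le_iff₀ (by positivity)] at hz
  linarith

variable (U) in
def robustMomentCone : Set (WeakDual ℝ E × ℝ) :=
  ⋃ u : {u : T → WeakDual ℝ E × ℝ // ∀ s, u s ∈ U s},
    (PointedCone.hull ℝ (range u.1 ∪ {(0, 1)}) : Set (WeakDual ℝ E × ℝ))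

theorem iUnion_convexHull_coneSet_eq_robustMomentCone :
    (⋃ u : {u : T → WeakDual ℝ E × ℝ // ∀ s, u s ∈ U s}, convexHull ℝ
        (coneSet (Set.range (fun t => u.1 t) ∪ {((0 : WeakDual ℝ E), (1 : ℝ))}))) =
      robustMomentCone U :=
  iUnion_congr fun _ => convexHull_coneSet_eq_hull ⟨_, Or.inr rfl⟩

theorem robustMomentCone_subset_characteristicCone :
    robustMomentCone U ⊆ characteristicCone U :=
  iUnion_subset fun u => Submodule.span_mono <| union_subset_union_left _ <|
    range_subset_iff.2 fun t => mem_iUnion.2 ⟨t, u.2 t⟩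

theorem characteristicCone_subset_robustMomentCone (hU : ∀ t, (U t).Nonempty)
    (hconv : Convex ℝ (robustMomentCone U)) : ↑(characteristicCone U) ⊆ robustMomentCone U := by
  rw [characteristicCone, ← convexHull_coneSet_eq_hull (union_nonempty.2 (Or.inr
    (singleton_nonempty _)))]
  refine convexHull_min ?_ hconv
  rintro _ ⟨l, hl, a, ha, rfl⟩
  obtain ⟨u, hu⟩ :
      ∃ u : {u : T → WeakDual ℝ E × ℝ // ∀ s, u s ∈ U s}, a ∈ range u.1 ∪ {(0, 1)} := by
    rcases ha with ha | ha
    · obtain ⟨t, ht⟩ := mem_iUnion.1 ha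
      obtain ⟨u, rfl⟩ := exists_pi_mem_apply_eq hU ht
      exact ⟨u, Or.inl ⟨t, rfl⟩⟩
    · exact ⟨⟨fun t => (hU t).some, fun t => (hU t).some_mem⟩, Or.inr ha⟩
  exact mem_iUnion.2 ⟨u, PointedCone.smul_mem _ hl (PointedCone.subset_hull hu)⟩

theorem isClosed_and_convex_robustMomentCone_iff (hU : ∀ t, (U t).Nonempty) :
    IsClosed (robustMomentCone U) ∧ Convex ℝ (robustMomentCone U) ↔
      closure ↑(characteristicCone U) ⊆ robustMomentCone U := by
  refine ⟨fun ⟨hclosed, hconv⟩ =>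
    closure_minimal (characteristicCone_subset_robustMomentCone hU hconv) hclosed, fun h => ?_⟩
  rw [(robustMomentCone_subset_characteristicCone.trans subset_closure).antisymm h]
  exact ⟨isClosed_closure, (PointedCone.convex _).closure⟩

end LinearSystem

section RobustDuality

variable {E : Type*} [AddCommGroup E] [Module ℝ E] [TopologicalSpace E]
  {U : T → Set (WeakDual ℝ E × ℝ)}

variable (U) in
def HasStableRobustStrongDuality : Prop :=
  ∀ c : WeakDual ℝ E, ⊥ < infRLIP U c →
    ∃ u : {u : T → WeakDual ℝ E × ℝ // ∀ s, u s ∈ U s}, ∃ μ : T →₀ ℝ,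
      (∀ t, 0 ≤ μ t) ∧ c = -(μ.sum fun t a => a • (u.1 t).1) ∧
      ((-(μ.sum fun t a => a * (u.1 t).2) : ℝ) : EReal) = infRLIP U c

theorem coe_le_infRLIP_iff {c : WeakDual ℝ E} {β : ℝ} :
    (β : EReal) ≤ infRLIP U c ↔ ∀ x ∈ feasibleSet U, β ≤ c x := by
  simp only [infRLIP, le_iInf_iff, EReal.coe_le_coe_iff, Subtype.forall]
  rfl

theorem coe_neg_snd_le_infRLIP_iff {p : WeakDual ℝ E × ℝ} :
    ((-p.2 : ℝ) : EReal) ≤ infRLIP U (-p.1) ↔ ∀ x ∈ feasibleSet U, p.1 x ≤ p.2 := by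
  simp only [coe_le_infRLIP_iff, WeakDual.neg_apply, neg_le_neg_iff]

theorem coe_neg_sum_le_infRLIP (u : {u : T → WeakDual ℝ E × ℝ // ∀ s, u s ∈ U s})
    {μ : T →₀ ℝ} (hμ : ∀ t, 0 ≤ μ t) :
    ((-(μ.sum fun t a => a * (u.1 t).2) : ℝ) : EReal) ≤
      infRLIP U (-(μ.sum fun t a => a • (u.1 t).1)) := by
  have hq : (μ.sum fun t a => a • (u.1 t).1, μ.sum fun t a => a * (u.1 t).2) ∈
      robustMomentCone U :=
    mem_iUnion.2 ⟨u, Prod.mem_hull_range_union_singleton_zero_one_iff.2 ⟨μ, hμ, rfl, le_rfl⟩⟩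
  exact coe_neg_snd_le_infRLIP_iff.2 fun x hx => apply_le_of_mem_closure_characteristicCone
    (subset_closure (robustMomentCone_subset_characteristicCone hq)) hx

theorem hasStableRobustStrongDuality_of_closure_subset (hF : (feasibleSet U).Nonempty)
    (h : closure ↑(characteristicCone U) ⊆ robustMomentCone U) :
    HasStableRobustStrongDuality U := by
  intro c hc
  obtain ⟨x₀, hx₀⟩ := hF
  obtain ⟨α, hα⟩ : ∃ α : ℝ, (α : EReal) = infRLIP U c :=
    ⟨_, EReal.coe_toReal (ne_top_of_le_ne_top (EReal.coe_ne_top (c x₀))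
      (iInf_le (fun x : feasibleSet U => ((c x : ℝ) : EReal)) ⟨x₀, hx₀⟩)) hc.ne'⟩
  have hmem : (-c, -α) ∈ robustMomentCone U := by
    refine h (mem_closure_characteristicCone_of_forall_apply_le ⟨x₀, hx₀⟩ fun x hx => ?_)
    simpa using coe_le_infRLIP_iff.1 hα.le x hx
  obtain ⟨u, hu⟩ := mem_iUnion.1 hmem
  obtain ⟨μ, hμ, hc, hval⟩ := Prod.mem_hull_range_union_singleton_zero_one_iff.1 hu
  refine ⟨u, μ, hμ, neg_eq_iff_eq_neg.1 hc, le_antisymm ?_ ?_⟩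
  · simpa [← hc] using coe_neg_sum_le_infRLIP u hμ
  · rw [← hα]
    exact EReal.coe_le_coe_iff.2 (by linarith)

theorem closure_subset_of_hasStableRobustStrongDuality (hd : HasStableRobustStrongDuality U) :
    closure ↑(characteristicCone U) ⊆ robustMomentCone U := by
  intro p hp
  have hle := coe_neg_snd_le_infRLIP_iff.2 fun x hx =>
    apply_le_of_mem_closure_characteristicCone hp hx
  obtain ⟨u, μ, hμ, hc, hval⟩ := hd (-p.1) ((EReal.bot_lt_coe _).trans_le hle)
  refine mem_iUnion.2 ⟨u, Prod.mem_hull_range_union_singleton_zero_one_iff.2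
    ⟨μ, hμ, neg_inj.1 hc, ?_⟩⟩
  rw [← hval] at hle
  linarith [EReal.coe_le_coe_iff.1 hle]

end RobustDuality

theorem stmt13_general (U : T → Set (WeakDual ℝ X × ℝ)) (hU : ∀ t, (U t).Nonempty)
    (hF : {x : X | ∀ t, ∀ v ∈ U t, v.1 x ≤ v.2}.Nonempty) :
    (IsClosed (⋃ u : {u : T → WeakDual ℝ X × ℝ // ∀ s, u s ∈ U s}, convexHull ℝ
        (coneSet (Set.range (fun t => u.1 t) ∪ {((0 : WeakDual ℝ X), (1 : ℝ))}))) ∧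
      Convex ℝ (⋃ u : {u : T → WeakDual ℝ X × ℝ // ∀ s, u s ∈ U s}, convexHull ℝ
        (coneSet (Set.range (fun t => u.1 t) ∪ {((0 : WeakDual ℝ X), (1 : ℝ))})))) ↔
    (∀ c : WeakDual ℝ X, ⊥ < infRLIP U c →
      ∃ u : {u : T → WeakDual ℝ X × ℝ // ∀ s, u s ∈ U s}, ∃ μ : T →₀ ℝ,
        (∀ t, 0 ≤ μ t) ∧ c = -(μ.sum fun t a => a • (u.1 t).1) ∧
        ((-(μ.sum fun t a => a * (u.1 t).2) : ℝ) : EReal) = infRLIP U c) := by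
  rw [iUnion_convexHull_coneSet_eq_robustMomentCone, isClosed_and_convex_robustMomentCone_iff hU]
  exact ⟨hasStableRobustStrongDuality_of_closure_subset hF,
    closure_subset_of_hasStableRobustStrongDuality⟩

/-- Theorem 4.1, case i = 3: the robust moment cone
𝒩₃ = ⋃_{u∈𝒰} co cone(u(T) ∪ {(0,1)}) is closed and convex iff stable robust strong
duality holds for the pair (RLIP_c)-(RLID³_c). -/
theorem stmt13 [Nonempty T] (U : T → Set (WeakDual ℝ X × ℝ)) (hU : ∀ t, (U t).Nonempty)
    (hF : {x : X | ∀ t, ∀ v ∈ U t, v.1 x ≤ v.2}.Nonempty) :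
    (IsClosed (⋃ u : {u : T → WeakDual ℝ X × ℝ // ∀ s, u s ∈ U s}, convexHull ℝ
        (coneSet (Set.range (fun t => u.1 t) ∪ {((0 : WeakDual ℝ X), (1 : ℝ))}))) ∧
      Convex ℝ (⋃ u : {u : T → WeakDual ℝ X × ℝ // ∀ s, u s ∈ U s}, convexHull ℝ
        (coneSet (Set.range (fun t => u.1 t) ∪ {((0 : WeakDual ℝ X), (1 : ℝ))})))) ↔
    (∀ c : WeakDual ℝ X, ⊥ < infRLIP U c →
      ∃ u : {u : T → WeakDual ℝ X × ℝ // ∀ s, u s ∈ U s}, ∃ μ : T →₀ ℝ,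
        (∀ t, 0 ≤ μ t) ∧ c = -(μ.sum fun t a => a • (u.1 t).1) ∧
        ((-(μ.sum fun t a => a * (u.1 t).2) : ℝ) : EReal) = infRLIP U c) :=
  stmt13_general U hU hF
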